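/- arXiv:1110.1822 — 2 statements merged into one kernel-verified Lean document; each statement's English description precedes it below -/
import Mathlib

section
/- Let γ be the standard Gaussian measure on ℝ^d and let v : ℝ^d → ℝ be twice continuously differentiable such that g = e^{−v} is a probability density with respect to γ and g, |∇g| and ‖D²g‖ are bounded on ℝ^d. For t > 0 set g_t = T_t g and v_t = −log g_t. Then for every x ∈ ℝ^d and every h ∈ ℝ^d, ∂²_h v_t(x) ≤ e^{−2t} · T_t(e^{−v} ∂²_h v)(x) / T_t(e^{−v})(x), where ∂²_h denotes the second directional derivative in direction h. -/
open MeasureTheory Real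

noncomputable section

/-- The standard Gaussian measure on `ℝ^d`. -/
def stdGaussian (d : ℕ) : Measure (EuclideanSpace ℝ (Fin d)) :=
  volume.withDensity
    (fun x => ENNReal.ofReal ((2 * π) ^ (-(d : ℝ) / 2) * Real.exp (-‖x‖ ^ 2 / 2)))

/-- The Hessian matrix of `f` at `x`. -/
def hessianMat {d : ℕ} (f : EuclideanSpace ℝ (Fin d) → ℝ)
    (x : EuclideanSpace ℝ (Fin d)) : Matrix (Fin d) (Fin d) ℝ :=
  fun i j => gradient (fun y => gradient f y i) x j

/-- The derivative of the Hessian matrix in the `i`-th coordinate direction. -/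
def hessianDeriv {d : ℕ} (f : EuclideanSpace ℝ (Fin d) → ℝ) (i : Fin d)
    (x : EuclideanSpace ℝ (Fin d)) : Matrix (Fin d) (Fin d) ℝ :=
  fun j k => gradient (fun y => hessianMat f y j k) x i

/-- Squared Hilbert–Schmidt (Frobenius) norm of a matrix. -/
def hsNormSq {d : ℕ} (A : Matrix (Fin d) (Fin d) ℝ) : ℝ :=
  ∑ i, ∑ j, (A i j) ^ 2

/-- Operator norm of a matrix acting on Euclidean space. -/
def matOpNorm {d : ℕ} (A : Matrix (Fin d) (Fin d) ℝ) : ℝ :=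
  sSup {r | ∃ h : Fin d → ℝ, ∑ i, h i ^ 2 ≤ 1 ∧ r = Real.sqrt (∑ i, (A.mulVec h i) ^ 2)}

/-- `M(A) = sup {⟨Ah, h⟩ : |h| ≤ 1}`. -/
def quadSup {d : ℕ} (A : Matrix (Fin d) (Fin d) ℝ) : ℝ :=
  sSup {r | ∃ h : Fin d → ℝ, ∑ i, h i ^ 2 ≤ 1 ∧ r = dotProduct (A.mulVec h) h}

/-- Fredholm–Carleman determinant `det₂ A = det A · exp(tr(I - A))`. -/
def det2 {d : ℕ} (A : Matrix (Fin d) (Fin d) ℝ) : ℝ :=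
  A.det * Real.exp ((1 - A).trace)

/-- The Ornstein–Uhlenbeck semigroup (Bochner-integral form). -/
def ouSemigroup (d : ℕ) (t : ℝ) (f : EuclideanSpace ℝ (Fin d) → ℝ)
    (x : EuclideanSpace ℝ (Fin d)) : ℝ :=
  ∫ y, f (Real.exp (-t) • x + Real.sqrt (1 - Real.exp (-2 * t)) • y) ∂(stdGaussian d)

/-- Second directional derivative of `f` at `x` in direction `h`. -/
def dirDeriv2 {d : ℕ} (f : EuclideanSpace ℝ (Fin d) → ℝ)
    (x h : EuclideanSpace ℝ (Fin d)) : ℝ :=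
  deriv (deriv (fun s : ℝ => f (x + s • h))) 0

/-!
With `g = e^{-v}` and `g_t = T_t g`, differentiation under the Gaussian integral gives
`∂_h T_t f = e^{-t} T_t (∂_h f)`. Since `∂_h g = -g ∂_h v` and `∂²_h g = g ((∂_h v)² - ∂²_h v)`,
this turns `∂²_h v_t = -∂²_h g_t / g_t + (∂_h g_t / g_t)²` into
`e^{-2t} (T_t(g ∂²_h v) / g_t - (T_t(g (∂_h v)²) g_t - T_t(g ∂_h v)²) / g_t²)`,
and the subtracted term is nonnegative by the Cauchy–Schwarz inequality for the weight `g`.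
All integrands are bounded; for `g (∂_h v)² = (∂_h g)² / g` this is the inequality
`f'(0)² ≤ 2 (sup f'') f(0)` for nonnegative `f` on `ℝ`, applied along lines in direction `h`.
-/

open RealInnerProductSpace Matrix

open Set in
theorem le_add_mul_add_mul_sq_of_hasDerivAt {f f' f'' : ℝ → ℝ} {M : ℝ}
    (hf : ∀ s, HasDerivAt f (f' s) s) (hf' : ∀ s, HasDerivAt f' (f'' s) s)
    (hM : ∀ s, f'' s ≤ M) (s : ℝ) : f s ≤ f 0 + f' 0 * s + M / 2 * s ^ 2 := by
  set φ : ℝ → ℝ := fun s => f 0 + f' 0 * s + M / 2 * s ^ 2 - f s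
  have hφ (s : ℝ) : HasDerivAt φ (f' 0 + M * s - f' s) s :=
    ((((hasDerivAt_id s).const_mul (f' 0)).const_add (f 0)).add
      (((hasDerivAt_id s).pow 2).const_mul (M / 2))).sub (hf s) |>.congr_deriv (by simp; ring)
  have hφ' (s : ℝ) : HasDerivAt (fun s => f' 0 + M * s - f' s) (M - f'' s) s :=
    (((hasDerivAt_id s).const_mul M).const_add (f' 0)).sub (hf' s) |>.congr_deriv (by ring)
  have hconvex : ConvexOn ℝ univ φ :=
    convexOn_of_hasDerivWithinAt2_nonneg convex_univ (HasDerivAt.continuousOn fun s _ => hφ s)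
      (fun s _ => (hφ s).hasDerivWithinAt) (fun s _ => (hφ' s).hasDerivWithinAt)
      fun s _ => sub_nonneg.2 (hM s)
  have hφ_zero : φ 0 = 0 := by simp [φ]
  have hφ'_zero : HasDerivAt φ 0 0 := by simpa using hφ 0
  suffices 0 ≤ φ s by simp only [φ] at this; linarith
  rcases lt_trichotomy s 0 with hs | rfl | hs
  · have := hconvex.slope_le_of_hasDerivAt (mem_univ s) (mem_univ 0) hs hφ'_zero
    rw [slope_def_field, div_le_iff₀ (by linarith)] at this
    linarith
  · exact hφ_zero.ge
  · have := hconvex.le_slope_of_hasDerivAt (mem_univ 0) (mem_univ s) hs hφ'_zero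
    rw [slope_def_field, le_div_iff₀ (by linarith)] at this
    linarith

theorem sq_deriv_le_of_nonneg {f f' f'' : ℝ → ℝ} {M : ℝ}
    (hf : ∀ s, HasDerivAt f (f' s) s) (hf' : ∀ s, HasDerivAt f' (f'' s) s)
    (hM : ∀ s, f'' s ≤ M) (hf_nonneg : ∀ s, 0 ≤ f s) : f' 0 ^ 2 ≤ 2 * M * f 0 := by
  have := discrim_le_zero (a := M / 2) (b := f' 0) (c := f 0) fun s => (hf_nonneg s).trans <|
    (le_add_mul_add_mul_sq_of_hasDerivAt hf hf' hM s).trans_eq (by ring)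
  rw [discrim] at this
  linarith

theorem deriv_deriv_neg_log {Φ Ψ : ℝ → ℝ} {X s₀ : ℝ} (hΦ : ∀ s, HasDerivAt Φ (Ψ s) s)
    (hΨ : HasDerivAt Ψ X s₀) (hΦ_ne : ∀ s, Φ s ≠ 0) :
    deriv (deriv fun s => -log (Φ s)) s₀ = -(X * Φ s₀ - Ψ s₀ ^ 2) / Φ s₀ ^ 2 := by
  have hderiv : deriv (fun s => -log (Φ s)) = fun s => -(Ψ s / Φ s) :=
    funext fun s => ((hΦ s).log (hΦ_ne s)).neg.deriv
  have hderiv2 : HasDerivAt (fun s => -(Ψ s / Φ s)) _ s₀ := (hΨ.fun_div (hΦ s₀) (hΦ_ne s₀)).neg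
  rw [hderiv, hderiv2.deriv]
  ring

theorem sq_integral_mul_le {α : Type*} [MeasurableSpace α] {μ : Measure α} {w f : α → ℝ}
    (hw : ∀ a, 0 ≤ w a) (hw_int : Integrable w μ) (hwf : Integrable (fun a => w a * f a) μ)
    (hwf2 : Integrable (fun a => w a * f a ^ 2) μ) :
    (∫ a, w a * f a ∂μ) ^ 2 ≤ (∫ a, w a * f a ^ 2 ∂μ) * ∫ a, w a ∂μ := by
  have hquad : ∀ c : ℝ, 0 ≤ (∫ a, w a ∂μ) * (c * c) + 2 * (∫ a, w a * f a ∂μ) * c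
      + ∫ a, w a * f a ^ 2 ∂μ := fun c => by
    have hexpand : ∫ a, w a * (c + f a) ^ 2 ∂μ = (∫ a, w a ∂μ) * (c * c)
        + 2 * (∫ a, w a * f a ∂μ) * c + ∫ a, w a * f a ^ 2 ∂μ := by
      have : (fun a => w a * (c + f a) ^ 2)
          = fun a => c * c * w a + 2 * c * (w a * f a) + w a * f a ^ 2 := by
        funext a; ring
      rw [this, integral_add, integral_add, integral_const_mul, integral_const_mul]
      · ring
      exacts [hw_int.const_mul _, hwf.const_mul _, (hw_int.const_mul _).add (hwf.const_mul _),
        hwf2]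
    exact hexpand ▸ integral_nonneg fun a => mul_nonneg (hw a) (sq_nonneg (c + f a))
  have := discrim_le_zero hquad
  rw [discrim] at this
  linarith

theorem integrable_stdGaussian_density (d : ℕ) :
    Integrable (fun x : EuclideanSpace ℝ (Fin d) =>
      (2 * π) ^ (-(d : ℝ) / 2) * exp (-‖x‖ ^ 2 / 2)) := by
  refine ((GaussianFourier.integrable_cexp_neg_mul_sq_norm_add_of_euclideanSpace (ι := Fin d)
    (b := 1 / 2) (by norm_num) 0 0).norm.congr (.of_forall fun x => ?_)).const_mul _
  simp [Complex.norm_exp, ← Complex.ofReal_pow]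
  ring_nf

instance (d : ℕ) : IsFiniteMeasure (stdGaussian d) :=
  isFiniteMeasure_withDensity_ofReal (integrable_stdGaussian_density d).2

instance (d : ℕ) : (stdGaussian d).IsOpenPosMeasure :=
  Measure.AbsolutelyContinuous.isOpenPosMeasure <|
    withDensity_absolutelyContinuous' (by fun_prop) (ae_of_all _ fun _ => by positivity)

section LineDerivatives

variable {E : Type*} [NormedAddCommGroup E] [NormedSpace ℝ E] {f : E → ℝ}

theorem hasDerivAt_comp_add_smul (hf : Differentiable ℝ f) (z w : E) (s : ℝ) :
    HasDerivAt (fun s : ℝ => f (z + s • w)) (fderiv ℝ f (z + s • w) w) s := by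
  have : HasDerivAt (fun s : ℝ => z + s • w) w s := by
    simpa using ((hasDerivAt_id s).smul_const w).const_add z
  exact (hf _).hasFDerivAt.comp_hasDerivAt s this

theorem contDiff_one_fderiv_apply (hf : ContDiff ℝ 2 f) (w : E) :
    ContDiff ℝ 1 fun z => fderiv ℝ f z w :=
  (hf.fderiv_right (by norm_num)).clm_apply contDiff_const

end LineDerivatives

section DirDeriv2

variable {d : ℕ} {f v : EuclideanSpace ℝ (Fin d) → ℝ}

theorem dirDeriv2_eq_fderiv_fderiv_apply (hf : ContDiff ℝ 2 f) (x h : EuclideanSpace ℝ (Fin d)) :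
    dirDeriv2 f x h = fderiv ℝ (fun z => fderiv ℝ f z h) x h := by
  have hline : deriv (fun s : ℝ => f (x + s • h)) = fun s => fderiv ℝ f (x + s • h) h :=
    funext fun s => (hasDerivAt_comp_add_smul (hf.differentiable two_ne_zero) x h s).deriv
  have hf₁ := (contDiff_one_fderiv_apply hf h).differentiable one_ne_zero
  rw [dirDeriv2, hline, (hasDerivAt_comp_add_smul hf₁ x h 0).deriv, zero_smul, add_zero]

theorem hasDerivAt_fderiv_comp_add_smul (hf : ContDiff ℝ 2 f) (x h : EuclideanSpace ℝ (Fin d))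
    (s : ℝ) :
    HasDerivAt (fun s : ℝ => fderiv ℝ f (x + s • h) h) (dirDeriv2 f (x + s • h) h) s := by
  rw [dirDeriv2_eq_fderiv_fderiv_apply hf]
  exact hasDerivAt_comp_add_smul ((contDiff_one_fderiv_apply hf h).differentiable one_ne_zero) x h s

theorem continuous_dirDeriv2 (hf : ContDiff ℝ 2 f) (h : EuclideanSpace ℝ (Fin d)) :
    Continuous fun x => dirDeriv2 f x h := by
  simp_rw [dirDeriv2_eq_fderiv_fderiv_apply hf]
  exact ((contDiff_one_fderiv_apply hf h).continuous_fderiv one_ne_zero).clm_apply continuous_const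

theorem fderiv_exp_neg (hv : Differentiable ℝ v) (x h : EuclideanSpace ℝ (Fin d)) :
    fderiv ℝ (fun y => exp (-v y)) x h = -(exp (-v x) * fderiv ℝ v x h) := by
  have : HasFDerivAt (fun y => exp (-v y)) (exp (-v x) • -fderiv ℝ v x) x :=
    (hv x).hasFDerivAt.neg.exp
  simp [this.fderiv]

theorem dirDeriv2_exp_neg (hv : ContDiff ℝ 2 v) (x h : EuclideanSpace ℝ (Fin d)) :
    dirDeriv2 (fun y => exp (-v y)) x h
      = exp (-v x) * (fderiv ℝ v x h ^ 2 - dirDeriv2 v x h) := by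
  have hv₁ := hv.differentiable two_ne_zero
  have hline : deriv (fun s : ℝ => exp (-v (x + s • h)))
      = fun s => -(exp (-v (x + s • h)) * fderiv ℝ v (x + s • h) h) :=
    funext fun s => by
      have : HasDerivAt (fun s : ℝ => exp (-v (x + s • h)))
          (exp (-v (x + s • h)) * -fderiv ℝ v (x + s • h) h) s :=
        (hasDerivAt_comp_add_smul hv₁ x h s).neg.exp
      rw [this.deriv]; ring
  have hderiv (s : ℝ) :
      HasDerivAt (fun s : ℝ => -(exp (-v (x + s • h)) * fderiv ℝ v (x + s • h) h))
        (exp (-v (x + s • h)) * (fderiv ℝ v (x + s • h) h ^ 2 - dirDeriv2 v (x + s • h) h)) s :=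
    ((hasDerivAt_comp_add_smul hv₁ x h s).neg.exp.mul
      (hasDerivAt_fderiv_comp_add_smul hv x h s)).neg.congr_deriv
      (by simp only [Pi.neg_apply]; ring)
  simpa [dirDeriv2, hline] using (hderiv 0).deriv

end DirDeriv2

theorem matOpNorm_eq_norm_toEuclideanCLM {d : ℕ} (A : Matrix (Fin d) (Fin d) ℝ) :
    matOpNorm A = ‖toEuclideanCLM (𝕜 := ℝ) A‖ := by
  set T := toEuclideanCLM (𝕜 := ℝ) A
  have hnorm (u : Fin d → ℝ) : √(∑ i, (A *ᵥ u) i ^ 2) = ‖T (WithLp.toLp 2 u)‖ := by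
    simp [T, EuclideanSpace.norm_eq]
  have hunit (u : Fin d → ℝ) :
      ∑ i, u i ^ 2 ≤ 1 ↔ ‖(WithLp.toLp 2 u : EuclideanSpace ℝ (Fin d))‖ ≤ 1 := by
    simp [EuclideanSpace.norm_eq]
  have hle : ∀ r ∈ {r | ∃ u : Fin d → ℝ, ∑ i, u i ^ 2 ≤ 1 ∧ r = √(∑ i, (A *ᵥ u) i ^ 2)},
      r ≤ ‖T‖ := by
    rintro r ⟨u, hu, rfl⟩
    exact hnorm u ▸ T.unit_le_opNorm _ ((hunit u).1 hu)
  have hmem (x : EuclideanSpace ℝ (Fin d)) (hx : ‖x‖ ≤ 1) : ‖T x‖ ≤ matOpNorm A :=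
    le_csSup ⟨_, hle⟩ ⟨x.ofLp, (hunit _).2 hx, (hnorm _).symm⟩
  refine le_antisymm (csSup_le ⟨_, 0, by simp, rfl⟩ hle) ?_
  exact T.opNorm_le_of_unit_norm ((norm_nonneg _).trans (hmem 0 (by simp))) fun x hx => hmem x hx.le

section Hessian

variable {d : ℕ} {f : EuclideanSpace ℝ (Fin d) → ℝ}

theorem gradient_apply_eq_fderiv (z : EuclideanSpace ℝ (Fin d)) (i : Fin d) :
    gradient f z i = fderiv ℝ f z (EuclideanSpace.single i 1) := by
  rw [← inner_gradient_left, EuclideanSpace.inner_single_right]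
  simp

theorem dirDeriv2_eq_inner_hessianMat (hf : ContDiff ℝ 2 f) (x h : EuclideanSpace ℝ (Fin d)) :
    dirDeriv2 f x h = ⟪h, toEuclideanCLM (𝕜 := ℝ) (hessianMat f x) h⟫ := by
  have hgrad (i : Fin d) : Differentiable ℝ fun z => gradient f z i := by
    simpa only [gradient_apply_eq_fderiv] using
      (contDiff_one_fderiv_apply hf _).differentiable one_ne_zero
  have hexpand : (fun z => fderiv ℝ f z h) = fun z => ∑ i, h i * gradient f z i :=
    funext fun z => by simp [← inner_gradient_left, PiLp.inner_apply]
  rw [dirDeriv2_eq_fderiv_fderiv_apply hf, hexpand,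
    fderiv_fun_sum fun i _ => ((hgrad i).const_mul (h i)) x, _root_.sum_apply,
    inner_toEuclideanCLM, dotProduct]
  refine Finset.sum_congr rfl fun i _ => ?_
  rw [fderiv_const_mul ((hgrad i) x), _root_.smul_apply, smul_eq_mul,
    ← inner_gradient_left (f := fun z => gradient f z i)]
  simp only [hessianMat, PiLp.inner_apply, mulVec, dotProduct, RCLike.inner_apply, conj_trivial,
    Finset.mul_sum]
  exact Finset.sum_congr rfl fun j _ => by ring

theorem abs_dirDeriv2_le (hf : ContDiff ℝ 2 f) (x h : EuclideanSpace ℝ (Fin d)) :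
    |dirDeriv2 f x h| ≤ matOpNorm (hessianMat f x) * ‖h‖ ^ 2 := by
  rw [dirDeriv2_eq_inner_hessianMat hf, matOpNorm_eq_norm_toEuclideanCLM]
  set T := toEuclideanCLM (𝕜 := ℝ) (hessianMat f x)
  calc _ ≤ ‖h‖ * ‖T h‖ := abs_real_inner_le_norm _ _
    _ ≤ ‖h‖ * (‖T‖ * ‖h‖) := by gcongr; exact T.le_opNorm h
    _ = _ := by ring

end Hessian

section OrnsteinUhlenbeck

variable {d : ℕ} {t : ℝ} {h : EuclideanSpace ℝ (Fin d)} {φ ψ : EuclideanSpace ℝ (Fin d) → ℝ}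

theorem integrable_ouSemigroup_integrand (hφ : Continuous φ) (hφ_bdd : ∃ C, ∀ u, |φ u| ≤ C)
    (x : EuclideanSpace ℝ (Fin d)) :
    Integrable (fun y => φ (exp (-t) • x + √(1 - exp (-2 * t)) • y)) (stdGaussian d) := by
  obtain ⟨C, hC⟩ := hφ_bdd
  exact .of_bound (by fun_prop : Continuous _).aestronglyMeasurable C (ae_of_all _ fun y => hC _)

theorem ouSemigroup_sub (hφ : Continuous φ) (hφ_bdd : ∃ C, ∀ u, |φ u| ≤ C) (hψ : Continuous ψ)
    (hψ_bdd : ∃ C, ∀ u, |ψ u| ≤ C) (x : EuclideanSpace ℝ (Fin d)) :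
    ouSemigroup d t (fun u => φ u - ψ u) x = ouSemigroup d t φ x - ouSemigroup d t ψ x :=
  integral_sub (integrable_ouSemigroup_integrand hφ hφ_bdd x)
    (integrable_ouSemigroup_integrand hψ hψ_bdd x)

theorem ouSemigroup_pos (hφ : Continuous φ) (hφ_bdd : ∃ C, ∀ u, |φ u| ≤ C)
    (hφ_pos : ∀ u, 0 < φ u) (x : EuclideanSpace ℝ (Fin d)) : 0 < ouSemigroup d t φ x :=
  integral_pos_of_integrable_nonneg_nonzero (x := 0) (by fun_prop)
    (integrable_ouSemigroup_integrand hφ hφ_bdd x) (fun y => (hφ_pos _).le) (hφ_pos _).ne'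

theorem hasDerivAt_ouSemigroup_comp_add_smul {φ' : EuclideanSpace ℝ (Fin d) → ℝ}
    (hφ : Continuous φ) (hφ_bdd : ∃ C, ∀ u, |φ u| ≤ C)
    (hφ' : Continuous φ') (hφ'_bdd : ∃ C, ∀ u, |φ' u| ≤ C)
    (hderiv : ∀ u s, HasDerivAt (fun s : ℝ => φ (u + s • h)) (φ' (u + s • h)) s)
    (x : EuclideanSpace ℝ (Fin d)) (s : ℝ) :
    HasDerivAt (fun s => ouSemigroup d t φ (x + s • h))
      (exp (-t) * ouSemigroup d t φ' (x + s • h)) s := by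
  obtain ⟨C', hC'⟩ := hφ'_bdd
  set σ := √(1 - exp (-2 * t))
  have hline (y : EuclideanSpace ℝ (Fin d)) (r : ℝ) :
      exp (-t) • (x + r • h) + σ • y = (exp (-t) • x + σ • y) + (exp (-t) * r) • h := by
    module
  have hderiv_integrand (y : EuclideanSpace ℝ (Fin d)) (r : ℝ) :
      HasDerivAt (fun r : ℝ => φ (exp (-t) • (x + r • h) + σ • y))
        (exp (-t) * φ' (exp (-t) • (x + r • h) + σ • y)) r := by
    simp_rw [hline]
    exact ((hderiv _ _).comp r ((hasDerivAt_id r).const_mul (exp (-t)))).congr_deriv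
      (by simp [mul_comm])
  rw [ouSemigroup, ← integral_const_mul]
  refine (hasDerivAt_integral_of_dominated_loc_of_deriv_le (bound := fun _ => exp (-t) * C')
    Filter.univ_mem (.of_forall fun r => (integrable_ouSemigroup_integrand hφ hφ_bdd _).1)
    (integrable_ouSemigroup_integrand hφ hφ_bdd _) (by fun_prop : Continuous _).aestronglyMeasurable
    (ae_of_all _ fun y r _ => ?_) (integrable_const _)
    (ae_of_all _ fun y r _ => hderiv_integrand y r)).2
  rw [norm_mul, norm_of_nonneg (exp_pos _).le]
  exact mul_le_mul_of_nonneg_left (hC' _) (exp_pos _).le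

theorem dirDeriv2_neg_log_ouSemigroup {g : EuclideanSpace ℝ (Fin d) → ℝ} (hg : ContDiff ℝ 2 g)
    (hg_pos : ∀ u, 0 < g u) (hg_bdd : ∃ C, ∀ u, |g u| ≤ C)
    (hg₁ : ∃ C, ∀ u, |fderiv ℝ g u h| ≤ C) (hg₂ : ∃ C, ∀ u, |dirDeriv2 g u h| ≤ C)
    (x : EuclideanSpace ℝ (Fin d)) :
    dirDeriv2 (fun y => -log (ouSemigroup d t g y)) x h
      = -(exp (-t) ^ 2 * ouSemigroup d t (fun u => dirDeriv2 g u h) x * ouSemigroup d t g x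
          - (exp (-t) * ouSemigroup d t (fun u => fderiv ℝ g u h) x) ^ 2)
        / ouSemigroup d t g x ^ 2 := by
  have hg₁_cont := (contDiff_one_fderiv_apply hg h).continuous
  have hΦ := hasDerivAt_ouSemigroup_comp_add_smul (t := t) hg.continuous hg_bdd hg₁_cont hg₁
    (hasDerivAt_comp_add_smul (hg.differentiable two_ne_zero) · h) x
  have hΨ := (hasDerivAt_ouSemigroup_comp_add_smul (t := t) hg₁_cont hg₁
    (continuous_dirDeriv2 hg h) hg₂ (hasDerivAt_fderiv_comp_add_smul hg · h) x 0).const_mul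
    (exp (-t))
  rw [dirDeriv2,
    deriv_deriv_neg_log hΦ hΨ fun s => (ouSemigroup_pos hg.continuous hg_bdd hg_pos _).ne']
  simp only [zero_smul, add_zero]
  ring

theorem sq_ouSemigroup_mul_le {w f : EuclideanSpace ℝ (Fin d) → ℝ} (hw_nonneg : ∀ u, 0 ≤ w u)
    (hw : Continuous w) (hw_bdd : ∃ C, ∀ u, |w u| ≤ C)
    (hwf : Continuous fun u => w u * f u) (hwf_bdd : ∃ C, ∀ u, |w u * f u| ≤ C)
    (hwf2 : Continuous fun u => w u * f u ^ 2) (hwf2_bdd : ∃ C, ∀ u, |w u * f u ^ 2| ≤ C)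
    (x : EuclideanSpace ℝ (Fin d)) :
    ouSemigroup d t (fun u => w u * f u) x ^ 2
      ≤ ouSemigroup d t (fun u => w u * f u ^ 2) x * ouSemigroup d t w x :=
  sq_integral_mul_le (fun _ => hw_nonneg _) (integrable_ouSemigroup_integrand hw hw_bdd x)
    (integrable_ouSemigroup_integrand hwf hwf_bdd x)
    (integrable_ouSemigroup_integrand hwf2 hwf2_bdd x)

end OrnsteinUhlenbeck

section ExpNeg

variable {d : ℕ} {t : ℝ} {v : EuclideanSpace ℝ (Fin d) → ℝ} {h : EuclideanSpace ℝ (Fin d)}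

theorem exp_neg_mul_sq_fderiv_le {M : ℝ} (hv : ContDiff ℝ 2 v)
    (hM : ∀ u, dirDeriv2 (fun y => exp (-v y)) u h ≤ M) (u : EuclideanSpace ℝ (Fin d)) :
    exp (-v u) * fderiv ℝ v u h ^ 2 ≤ 2 * M := by
  have := sq_deriv_le_of_nonneg (hasDerivAt_comp_add_smul
    (hv.neg.exp.differentiable two_ne_zero) u h)
    (hasDerivAt_fderiv_comp_add_smul hv.neg.exp u h) (fun s => hM _)
    (fun s => (exp_pos _).le)
  simp only [zero_smul, add_zero, fderiv_exp_neg (hv.differentiable two_ne_zero), neg_sq,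
    mul_pow] at this
  nlinarith [exp_pos (-v u)]

theorem dirDeriv2_neg_log_ouSemigroup_exp_neg_le (hv : ContDiff ℝ 2 v)
    (hg_bdd : ∃ C, ∀ u, exp (-v u) ≤ C)
    (hg₁ : ∃ C, ∀ u, |fderiv ℝ (fun y => exp (-v y)) u h| ≤ C)
    (hg₂ : ∃ C, ∀ u, |dirDeriv2 (fun y => exp (-v y)) u h| ≤ C) (x : EuclideanSpace ℝ (Fin d)) :
    dirDeriv2 (fun y => -log (ouSemigroup d t (fun z => exp (-v z)) y)) x h ≤
      exp (-2 * t) * ouSemigroup d t (fun y => exp (-v y) * dirDeriv2 v y h) x /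
        ouSemigroup d t (fun y => exp (-v y)) x := by
  have hv₁ := hv.differentiable two_ne_zero
  have hg := hv.neg.exp
  have hg_bdd' : ∃ C, ∀ u, |exp (-v u)| ≤ C := by
    simpa only [abs_of_pos (exp_pos _)] using hg_bdd
  obtain ⟨C₂, hC₂⟩ := hg₂
  have hK_bdd : ∃ C, ∀ u, |exp (-v u) * fderiv ℝ v u h ^ 2| ≤ C :=
    ⟨2 * C₂, fun u => by
      rw [abs_of_nonneg (by positivity)]
      exact exp_neg_mul_sq_fderiv_le hv (fun u => (le_abs_self _).trans (hC₂ u)) u⟩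
  have hK_cont : Continuous fun u => exp (-v u) * fderiv ℝ v u h ^ 2 :=
    hg.continuous.mul ((contDiff_one_fderiv_apply hv h).continuous.pow 2)
  have hJ₁ : ouSemigroup d t (fun u => fderiv ℝ (fun y => exp (-v y)) u h) x
      = -ouSemigroup d t (fun u => exp (-v u) * fderiv ℝ v u h) x := by
    simp only [fderiv_exp_neg hv₁, ouSemigroup, integral_neg]
  have hJ₂ : ouSemigroup d t (fun u => exp (-v u) * dirDeriv2 v u h) x
      = ouSemigroup d t (fun u => exp (-v u) * fderiv ℝ v u h ^ 2) x
        - ouSemigroup d t (fun u => dirDeriv2 (fun y => exp (-v y)) u h) x := by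
    rw [← ouSemigroup_sub hK_cont hK_bdd (continuous_dirDeriv2 hg h) ⟨C₂, hC₂⟩]
    congr 1
    ext u
    rw [dirDeriv2_exp_neg hv]
    ring
  have hCS := sq_ouSemigroup_mul_le (t := t) (fun u => (exp_pos (-v u)).le) hg.continuous hg_bdd'
    (hg.continuous.mul (contDiff_one_fderiv_apply hv h).continuous)
    (by simpa [fderiv_exp_neg hv₁, abs_neg] using hg₁) hK_cont hK_bdd x
  have hpos := ouSemigroup_pos (t := t) hg.continuous hg_bdd' (fun u => exp_pos (-v u)) x
  rw [dirDeriv2_neg_log_ouSemigroup hg (fun _ => exp_pos _) hg_bdd' hg₁ ⟨C₂, hC₂⟩, hJ₁, hJ₂,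
    show exp (-2 * t) = exp (-t) ^ 2 by rw [← exp_nat_mul]; ring_nf]
  rw [div_le_div_iff₀ (by positivity) hpos]
  nlinarith [mul_nonneg (mul_nonneg (sq_nonneg (exp (-t))) hpos.le) (sub_nonneg.2 hCS)]

end ExpNeg

theorem ou_second_directional_derivative_bound_general (d : ℕ)
    (v : EuclideanSpace ℝ (Fin d) → ℝ)
    (hv_smooth : ContDiff ℝ 2 v)
    (hg_bdd : ∃ C : ℝ, ∀ x, Real.exp (-v x) ≤ C)
    (hg'_bdd : ∃ C : ℝ, ∀ x, ‖gradient (fun y => Real.exp (-v y)) x‖ ≤ C)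
    (hg''_bdd : ∃ C : ℝ, ∀ x, matOpNorm (hessianMat (fun y => Real.exp (-v y)) x) ≤ C)
    (t : ℝ) (x h : EuclideanSpace ℝ (Fin d)) :
    dirDeriv2 (fun y => -Real.log (ouSemigroup d t (fun z => Real.exp (-v z)) y)) x h ≤
      Real.exp (-2 * t) *
        ouSemigroup d t (fun y => Real.exp (-v y) * dirDeriv2 v y h) x /
          ouSemigroup d t (fun y => Real.exp (-v y)) x := by
  obtain ⟨C₁, hC₁⟩ := hg'_bdd
  obtain ⟨C₂, hC₂⟩ := hg''_bdd
  refine dirDeriv2_neg_log_ouSemigroup_exp_neg_le hv_smooth hg_bdd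
    ⟨C₁ * ‖h‖, fun u => ?_⟩ ⟨C₂ * ‖h‖ ^ 2, fun u => ?_⟩ x
  · rw [← inner_gradient_left]
    exact (abs_real_inner_le_norm _ _).trans (by gcongr; exact hC₁ u)
  · exact (abs_dirDeriv2_le hv_smooth.neg.exp u h).trans (by gcongr; exact hC₂ u)

/-- pointwise bound for second directional derivatives of
`v_t = -log T_t(e^{-v})` along the Ornstein–Uhlenbeck semigroup. -/
theorem ou_second_directional_derivative_bound (d : ℕ)
    (v : EuclideanSpace ℝ (Fin d) → ℝ)
    (hv_smooth : ContDiff ℝ 2 v)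
    (hg_prob : ∫ x, Real.exp (-v x) ∂(stdGaussian d) = 1)
    (hg_bdd : ∃ C : ℝ, ∀ x, Real.exp (-v x) ≤ C)
    (hg'_bdd : ∃ C : ℝ, ∀ x, ‖gradient (fun y => Real.exp (-v y)) x‖ ≤ C)
    (hg''_bdd : ∃ C : ℝ, ∀ x, matOpNorm (hessianMat (fun y => Real.exp (-v y)) x) ≤ C)
    (t : ℝ) (ht : 0 < t) (x h : EuclideanSpace ℝ (Fin d)) :
    dirDeriv2 (fun y => -Real.log (ouSemigroup d t (fun z => Real.exp (-v z)) y)) x h ≤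
      Real.exp (-2 * t) *
        ouSemigroup d t (fun y => Real.exp (-v y) * dirDeriv2 v y h) x /
          ouSemigroup d t (fun y => Real.exp (-v y)) x :=
  ou_second_directional_derivative_bound_general d v hv_smooth hg_bdd hg'_bdd hg''_bdd t x h
end
end

section
/- Let (X, 𝒜, μ) be a finite measure space, let M < ∞, and let (f_n) and (h_n) be sequences of measurable real-valued functions on X such that h_n ≥ 0 for all n, the sequence (h_n) is uniformly integrable with respect to μ (i.e. sup_n ∫ h_n dμ < ∞ and for every ε > 0 there is δ > 0 such that μ(E) < δ implies ∫_E h_n dμ < ε for all n), and ∫ f_n²/(1 + h_n) dμ ≤ M for all n. Then the sequence (f_n) is uniformly integrable with respect to μ: sup_n ∫ |f_n| dμ < ∞ and for every ε > 0 there is δ > 0 such that μ(E) < δ implies ∫_E |f_n| dμ ≤ ε for all n. -/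
/-!
For every `t > 0`, AM-GM gives pointwise `|f| ≤ (t f² / (1 + h) + (1 + h) / t) / 2`, and
integrating over `E` yields `∫_E |f| ≤ (t M + (μ E + ∫_E h) / t) / 2`. Taking `t = 1` and
`E = univ` bounds `∫ |f|`; taking `t` so small that `t M ≤ ε`, and then `δ` so small that
`μ E + ∫_E h ≤ t ε`, gives `∫_E |f| ≤ ε`.
-/

open MeasureTheory

theorem abs_le_half_mul_sq_div_add_div (a : ℝ) {b t : ℝ} (hb : 0 < b) (ht : 0 < t) :
    |a| ≤ (t * (a ^ 2 / b) + b / t) / 2 := by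
  have key : |a| * (2 * b * t) ≤ t ^ 2 * a ^ 2 + b ^ 2 := by
    nlinarith [sq_nonneg (t * |a| - b), sq_abs a]
  have hrw : (t * (a ^ 2 / b) + b / t) / 2 = (t ^ 2 * a ^ 2 + b ^ 2) / (2 * b * t) := by
    field_simp
  rw [hrw, le_div_iff₀ (by positivity)]
  exact key

theorem half_mul_add_div_le {t M s ε : ℝ} (ht : 0 < t) (htM : t * M ≤ ε) (hs : s ≤ t * ε) :
    (t * M + s / t) / 2 ≤ ε := by
  have : s / t ≤ ε := by rwa [div_le_iff₀ ht, mul_comm]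
  linarith

section WeightedSq

variable {X : Type*} [MeasurableSpace X] {μ : Measure X} {f h : X → ℝ}

theorem abs_le_weighted_sq_bound (h0 : ∀ᵐ x ∂μ, 0 ≤ h x) {t : ℝ} (ht : 0 < t) :
    ∀ᵐ x ∂μ, |f x| ≤ (t * (f x ^ 2 / (1 + h x)) + (1 + h x) / t) / 2 := by
  filter_upwards [h0] with x hx
  exact abs_le_half_mul_sq_div_add_div (f x) (by linarith) ht

variable [IsFiniteMeasure μ]

theorem integrable_weighted_sq_bound (hh : Integrable h μ)
    (hfh : Integrable (fun x => f x ^ 2 / (1 + h x)) μ) (t : ℝ) :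
    Integrable (fun x => (t * (f x ^ 2 / (1 + h x)) + (1 + h x) / t) / 2) μ :=
  ((hfh.const_mul t).add (((integrable_const 1).add hh).div_const t)).div_const 2

theorem MeasureTheory.Integrable.of_sq_div_one_add (hf : AEStronglyMeasurable f μ)
    (h0 : ∀ᵐ x ∂μ, 0 ≤ h x) (hh : Integrable h μ)
    (hfh : Integrable (fun x => f x ^ 2 / (1 + h x)) μ) : Integrable f μ :=
  (integrable_weighted_sq_bound hh hfh 1).mono' hf <| by
    simpa only [Real.norm_eq_abs] using abs_le_weighted_sq_bound h0 one_pos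

theorem setIntegral_abs_le_of_integral_sq_div_one_add_le (h0 : ∀ᵐ x ∂μ, 0 ≤ h x)
    (hh : Integrable h μ) (hfh : Integrable (fun x => f x ^ 2 / (1 + h x)) μ) {M : ℝ}
    (hM : ∫ x, f x ^ 2 / (1 + h x) ∂μ ≤ M) {t : ℝ} (ht : 0 < t) (E : Set X) :
    ∫ x in E, |f x| ∂μ ≤ (t * M + (μ.real E + ∫ x in E, h x ∂μ) / t) / 2 := by
  have hE := integral_mono_of_nonneg (μ := μ.restrict E) (.of_forall fun x => abs_nonneg (f x))
    (integrable_weighted_sq_bound hh hfh t).restrict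
    (ae_restrict_of_ae (abs_le_weighted_sq_bound h0 ht))
  have h1 : Integrable (fun x => 1 + h x) (μ.restrict E) := ((integrable_const 1).add hh).restrict
  rw [integral_div, integral_add (hfh.const_mul t).restrict (h1.div_const t), integral_const_mul,
    integral_div, integral_add (integrable_const 1) hh.restrict, setIntegral_const, smul_eq_mul,
    mul_one] at hE
  have hg_nonneg : 0 ≤ᵐ[μ] fun x => f x ^ 2 / (1 + h x) := by
    filter_upwards [h0] with x hx
    positivity
  refine hE.trans ?_
  gcongr
  exact (setIntegral_le_integral hfh hg_nonneg).trans hM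

end WeightedSq

theorem uniformly_integrable_of_weighted_L2_bound_general
    {X : Type*} [MeasurableSpace X] (μ : Measure X) [IsFiniteMeasure μ]
    (M : ℝ) (f h : ℕ → X → ℝ)
    (hf_meas : ∀ n, Measurable (f n))
    (hh_nonneg : ∀ n x, 0 ≤ h n x)
    (hh_int : ∀ n, Integrable (h n) μ)
    (hh_sup : ∃ C : ℝ, ∀ n, ∫ x, h n x ∂μ ≤ C)
    (hh_ui : ∀ ε : ℝ, 0 < ε → ∃ δ : ℝ, 0 < δ ∧ ∀ n, ∀ E : Set X,
        MeasurableSet E → μ E < ENNReal.ofReal δ → ∫ x in E, h n x ∂μ < ε)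
    (hfh_int : ∀ n, Integrable (fun x => (f n x) ^ 2 / (1 + h n x)) μ)
    (hfh_bdd : ∀ n, ∫ x, (f n x) ^ 2 / (1 + h n x) ∂μ ≤ M) :
    (∀ n, Integrable (f n) μ) ∧
      (∃ C : ℝ, ∀ n, ∫ x, |f n x| ∂μ ≤ C) ∧
      ∀ ε : ℝ, 0 < ε → ∃ δ : ℝ, 0 < δ ∧ ∀ n, ∀ E : Set X,
        MeasurableSet E → μ E < ENNReal.ofReal δ → ∫ x in E, |f n x| ∂μ ≤ ε := by
  have h0 n : ∀ᵐ x ∂μ, 0 ≤ h n x := .of_forall (hh_nonneg n)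
  have key n {t : ℝ} (ht : 0 < t) (E : Set X) :=
    setIntegral_abs_le_of_integral_sq_div_one_add_le (h0 n) (hh_int n) (hfh_int n) (hfh_bdd n) ht E
  have hM : 0 ≤ M :=
    (integral_nonneg fun x => by have := hh_nonneg 0 x; positivity).trans (hfh_bdd 0)
  obtain ⟨C, hC⟩ := hh_sup
  refine ⟨fun n => .of_sq_div_one_add (hf_meas n).aestronglyMeasurable (h0 n) (hh_int n)
    (hfh_int n), ⟨(M + μ.real Set.univ + C) / 2, fun n => ?_⟩, fun ε hε => ?_⟩
  · have := key n one_pos Set.univ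
    simp only [Measure.restrict_univ, one_mul, div_one] at this
    linarith [hC n]
  · set t := ε / (M + 1)
    have ht : 0 < t := by positivity
    have htM : t * M ≤ ε := by
      rw [div_mul_eq_mul_div, div_le_iff₀ (by positivity)]
      nlinarith
    obtain ⟨δ, hδ, hδ_ui⟩ := hh_ui (t * ε / 2) (by positivity)
    refine ⟨min δ (t * ε / 2), by positivity, fun n E hE hμE => ?_⟩
    have hμE_small : μ.real E < t * ε / 2 := ENNReal.toReal_lt_of_lt_ofReal
      (hμE.trans_le (ENNReal.ofReal_le_ofReal (min_le_right _ _)))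
    have hhE_small := hδ_ui n E hE (hμE.trans_le (ENNReal.ofReal_le_ofReal (min_le_left _ _)))
    exact (key n ht E).trans (half_mul_add_div_le ht htM (by linarith))

/-- if `(h_n)` is a uniformly integrable sequence of nonnegative
functions and `∫ f_n²/(1 + h_n) dμ ≤ M` for all `n`, then `(f_n)` is uniformly
integrable. -/
theorem uniformly_integrable_of_weighted_L2_bound
    {X : Type*} [MeasurableSpace X] (μ : Measure X) [IsFiniteMeasure μ]
    (M : ℝ) (f h : ℕ → X → ℝ)
    (hf_meas : ∀ n, Measurable (f n)) (hh_meas : ∀ n, Measurable (h n))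
    (hh_nonneg : ∀ n x, 0 ≤ h n x)
    (hh_int : ∀ n, Integrable (h n) μ)
    (hh_sup : ∃ C : ℝ, ∀ n, ∫ x, h n x ∂μ ≤ C)
    (hh_ui : ∀ ε : ℝ, 0 < ε → ∃ δ : ℝ, 0 < δ ∧ ∀ n, ∀ E : Set X,
        MeasurableSet E → μ E < ENNReal.ofReal δ → ∫ x in E, h n x ∂μ < ε)
    (hfh_int : ∀ n, Integrable (fun x => (f n x) ^ 2 / (1 + h n x)) μ)
    (hfh_bdd : ∀ n, ∫ x, (f n x) ^ 2 / (1 + h n x) ∂μ ≤ M) :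
    (∀ n, Integrable (f n) μ) ∧
      (∃ C : ℝ, ∀ n, ∫ x, |f n x| ∂μ ≤ C) ∧
      ∀ ε : ℝ, 0 < ε → ∃ δ : ℝ, 0 < δ ∧ ∀ n, ∀ E : Set X,
        MeasurableSet E → μ E < ENNReal.ofReal δ → ∫ x in E, |f n x| ∂μ ≤ ε :=
  uniformly_integrable_of_weighted_L2_bound_general μ M f h hf_meas hh_nonneg hh_int hh_sup hh_ui
    hfh_int hfh_bdd
end
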